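/- arXiv:2309.08603 — 2 statements merged into one kernel-verified Lean document; each statement's English description precedes it below -/
import Mathlib

section
/- If e₀, e₁, …, e_N are real-valued exchangeable random variables (e.g., i.i.d.), then for any δ ∈ (0,1], the probability that e₀ exceeds the ⌈(1−δ)(N+1)⌉-th smallest value among e₁,…,e_N is at most δ + 1/(N+1). Equivalently, Prob(rank of e₀ among the N+1 values exceeds (1−δ)(N+1)) ≤ δ + 1/(N+1). -/
open MeasureTheory ProbabilityTheory

open scoped Classical in
/-- Rank of index 0 among the `N+1` values, with ties broken by the auxiliary
uniform variables `U` (lexicographic comparison). -/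
noncomputable def rankZero {N : ℕ} (e U : Fin (N + 1) → ℝ) : ℕ :=
  (Finset.univ.filter fun i : Fin (N + 1) =>
    e i < e 0 ∨ (e i = e 0 ∧ U i ≤ U 0)).card

/-! Almost surely the pairs `(eᵢ, Uᵢ)` are distinct, so their lexicographic ranks are distinct
numbers in `1, …, N + 1` and at most `N + 1 - ⌊(1 - δ)(N + 1)⌋` of them exceed the threshold
`(1 - δ)(N + 1)`. By exchangeability each index exceeds it with the same probability as index `0`,
so summing over the indices gives
`(N + 1) · P(rank₀ > (1 - δ)(N + 1)) ≤ N + 1 - ⌊(1 - δ)(N + 1)⌋ < δ (N + 1) + 1`. -/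

open Finset

section ValueRank

variable {ι α : Type*} [Fintype ι] [LinearOrder α]

noncomputable def valueRank (v : ι → α) (j : ι) : ℕ :=
  #{k | v k ≤ v j}

theorem valueRank_comp_equiv {κ : Type*} [Fintype κ] (v : κ → α) (σ : ι ≃ κ) (j : ι) :
    valueRank (v ∘ σ) j = valueRank v (σ j) :=
  card_equiv σ (by simp)

theorem valueRank_le_card (v : ι → α) (j : ι) : valueRank v j ≤ Fintype.card ι :=
  card_le_univ _

theorem valueRank_lt_valueRank {v : ι → α} {i j : ι} (h : v i < v j) :
    valueRank v i < valueRank v j := by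
  refine card_lt_card ⟨fun k hk => ?_, fun hsub => ?_⟩
  · simp only [mem_filter, mem_univ, true_and] at hk ⊢
    exact hk.trans h.le
  · exact h.not_ge (mem_filter.mp (hsub (mem_filter.mpr ⟨mem_univ j, le_rfl⟩))).2

theorem valueRank_injective {v : ι → α} (hv : Function.Injective v) :
    Function.Injective (valueRank v) := by
  intro i j hij
  by_contra hne
  rcases (hv.ne hne).lt_or_gt with h | h
  · exact (valueRank_lt_valueRank h).ne hij
  · exact (valueRank_lt_valueRank h).ne' hij

theorem card_filter_lt_valueRank_le {v : ι → α} (hv : Function.Injective v) (m : ℕ) :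
    #{j | m < valueRank v j} ≤ Fintype.card ι - m :=
  calc #{j | m < valueRank v j} ≤ #(Ioc m (Fintype.card ι)) :=
        card_le_card_of_injOn (valueRank v)
          (fun j hj => mem_Ioc.mpr ⟨(mem_filter.mp hj).2, valueRank_le_card v j⟩)
          (valueRank_injective hv).injOn
    _ = Fintype.card ι - m := Nat.card_Ioc _ _

end ValueRank

theorem rankZero_eq_valueRank {N : ℕ} (e U : Fin (N + 1) → ℝ) :
    rankZero e U = valueRank (fun i => toLex (e i, U i)) 0 := by
  simp only [rankZero, valueRank, Prod.Lex.toLex_le_toLex]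

theorem measurable_valueRank_toLex {ι : Type*} [Fintype ι] (j : ι) :
    Measurable fun v : ι → ℝ × ℝ => valueRank (toLex ∘ v) j := by
  simp only [valueRank, card_filter, Function.comp_apply, Prod.Lex.toLex_le_toLex]
  refine Finset.measurable_sum _ fun k _ => Measurable.ite ?_ measurable_const measurable_const
  have hk := measurable_pi_apply (X := fun _ : ι => ℝ × ℝ) k
  have hj := measurable_pi_apply (X := fun _ : ι => ℝ × ℝ) j
  exact (measurableSet_lt hk.fst hj.fst).union
    ((measurableSet_eq_fun hk.fst hj.fst).inter (measurableSet_le hk.snd hj.snd))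

theorem measure_preimage_comp_perm {Ω ι β : Type*} [MeasurableSpace Ω] [MeasurableSpace β]
    {P : Measure Ω} {X : Ω → ι → β} (hX : Measurable X) {σ : Equiv.Perm ι}
    (hσ : P.map (fun ω => X ω ∘ σ) = P.map X) {S : Set (ι → β)} (hS : MeasurableSet S) :
    P ((fun ω => X ω ∘ σ) ⁻¹' S) = P (X ⁻¹' S) := by
  have hXσ : Measurable fun ω => X ω ∘ σ :=
    measurable_pi_lambda _ fun i => (measurable_pi_apply (σ i)).comp hX
  rw [← Measure.map_apply hXσ hS, hσ, Measure.map_apply hX hS]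

theorem measure_lt_valueRank_eq_of_exchangeable {Ω ι : Type*} [MeasurableSpace Ω] [Fintype ι]
    {P : Measure Ω} {X : Ω → ι → ℝ × ℝ} (hX : Measurable X)
    (hexch : ∀ σ : Equiv.Perm ι, P.map (fun ω => X ω ∘ σ) = P.map X) (m : ℕ) (i j : ι) :
    P {ω | m < valueRank (toLex ∘ X ω) i} = P {ω | m < valueRank (toLex ∘ X ω) j} := by
  classical
  have hS : MeasurableSet {v : ι → ℝ × ℝ | m < valueRank (toLex ∘ v) j} :=
    measurableSet_lt measurable_const (measurable_valueRank_toLex j)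
  have hswap : {ω | m < valueRank (toLex ∘ X ω) i} =
      (fun ω => X ω ∘ Equiv.swap j i) ⁻¹' {v | m < valueRank (toLex ∘ v) j} := by
    ext ω
    simp [← Function.comp_assoc, valueRank_comp_equiv]
  rw [hswap, measure_preimage_comp_perm hX (hexch _) hS]
  rfl

theorem sum_measure_le_of_ae_card_le {Ω ι : Type*} [MeasurableSpace Ω] [Fintype ι]
    {μ : Measure Ω} {A : ι → Set Ω} [∀ j, DecidablePred (· ∈ A j)]
    (hA : ∀ j, MeasurableSet (A j)) {M : ℕ} (hM : ∀ᵐ ω ∂μ, #{j | ω ∈ A j} ≤ M) :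
    ∑ j, μ (A j) ≤ M * μ Set.univ := by
  calc ∑ j, μ (A j) = ∫⁻ ω, ∑ j, (A j).indicator 1 ω ∂μ := by
        rw [lintegral_finsetSum _ fun j _ => measurable_one.indicator (hA j)]
        simp [lintegral_indicator_one (hA _)]
    _ ≤ ∫⁻ _, (M : ENNReal) ∂μ := by
        refine lintegral_mono_ae (hM.mono fun ω hω => ?_)
        have hcard : ∑ j, (A j).indicator 1 ω = (#{j | ω ∈ A j} : ENNReal) := by
          simp [Set.indicator_apply]
        exact hcard ▸ Nat.cast_le.mpr hω
    _ = M * μ Set.univ := lintegral_const _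

theorem natCast_sub_floor_le (n : ℕ) {δ : ℝ} (hδ : 0 ≤ δ) :
    ((n - ⌊(1 - δ) * n⌋₊ : ℕ) : ℝ) ≤ δ * n + 1 := by
  have hfloor : ⌊(1 - δ) * n⌋₊ ≤ n :=
    Nat.floor_le_of_le (by nlinarith [n.cast_nonneg (α := ℝ)])
  have := Nat.lt_floor_add_one ((1 - δ) * n)
  rw [Nat.cast_sub hfloor]
  linarith

theorem le_ofReal_of_mul_le_sub_floor {n : ℕ} (hn : 0 < n) {δ : ℝ} (hδ : 0 ≤ δ)
    {x : ENNReal} (hx : n * x ≤ (n - ⌊(1 - δ) * n⌋₊ : ℕ)) :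
    x ≤ ENNReal.ofReal (δ + 1 / n) := by
  have hx_top : x ≠ ⊤ := by
    rintro rfl
    rw [ENNReal.mul_top (by exact_mod_cast hn.ne')] at hx
    exact ENNReal.natCast_ne_top _ (top_le_iff.mp hx)
  have hmul := ENNReal.toReal_mono (by simp) hx
  rw [ENNReal.toReal_mul, ENNReal.toReal_natCast, ENNReal.toReal_natCast] at hmul
  have hn' : (0 : ℝ) < n := by exact_mod_cast hn
  rw [← ENNReal.ofReal_toReal hx_top]
  refine ENNReal.ofReal_le_ofReal ?_
  calc x.toReal = n * x.toReal / n := by field_simp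
    _ ≤ (δ * n + 1) / n := by gcongr; exact hmul.trans (natCast_sub_floor_le n hδ)
    _ = δ + 1 / n := by field_simp

theorem conformal_rank_bound {Ω : Type*} [MeasurableSpace Ω]
    (P : Measure Ω) [IsProbabilityMeasure P] (N : ℕ)
    (e U : Fin (N + 1) → Ω → ℝ)
    (hme : ∀ i, Measurable (e i)) (hmU : ∀ i, Measurable (U i))
    -- exchangeability of the (value, tie-break) pairs
    (hexch : ∀ σ : Equiv.Perm (Fin (N + 1)),
      Measure.map (fun ω => fun i => (e (σ i) ω, U (σ i) ω)) P =
        Measure.map (fun ω => fun i => (e i ω, U i ω)) P)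
    -- tie-breaking works almost surely (no ties among the pairs)
    (hties : ∀ᵐ ω ∂P, Function.Injective (fun i => (e i ω, U i ω)))
    (δ : ℝ) (hδ0 : 0 < δ) (hδ1 : δ ≤ 1) :
    P {ω | (1 - δ) * (N + 1) < (rankZero (fun i => e i ω) (fun i => U i ω) : ℝ)} ≤
      ENNReal.ofReal (δ + 1 / (N + 1)) := by
  set m := ⌊(1 - δ) * ((N + 1 : ℕ) : ℝ)⌋₊
  set X : Ω → Fin (N + 1) → ℝ × ℝ := fun ω i => (e i ω, U i ω)
  have hX : Measurable X := measurable_pi_lambda _ fun i => (hme i).prodMk (hmU i)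
  have hevent : {ω | (1 - δ) * (N + 1) < (rankZero (fun i => e i ω) (fun i => U i ω) : ℝ)} =
      {ω | m < valueRank (toLex ∘ X ω) 0} := by
    ext ω
    simp only [Set.mem_ofPred_eq, rankZero_eq_valueRank, m]
    rw [Nat.floor_lt (mul_nonneg (sub_nonneg.mpr hδ1) (Nat.cast_nonneg _))]
    push_cast
    rfl
  have hcount : ∀ᵐ ω ∂P, #{j | m < valueRank (toLex ∘ X ω) j} ≤ N + 1 - m := by
    filter_upwards [hties] with ω hω
    simpa only [Fintype.card_fin] using card_filter_lt_valueRank_le (toLex.injective.comp hω) m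
  have hA j : MeasurableSet {ω | m < valueRank (toLex ∘ X ω) j} :=
    measurableSet_lt measurable_const ((measurable_valueRank_toLex j).comp hX)
  have hsum := sum_measure_le_of_ae_card_le hA hcount
  simp only [measure_lt_valueRank_eq_of_exchangeable hX hexch m _ 0, sum_const, card_univ,
    Fintype.card_fin, nsmul_eq_mul, measure_univ, mul_one] at hsum
  rw [hevent]
  simpa using le_ofReal_of_mul_le_sub_floor N.succ_pos hδ0.le hsum
end

section
/- Fallback tube safety: suppose at time t₀ a policy sequence u₀,…,u_T satisfies R̂_k(x̂_{t₀}, u) ⊕ E ⊆ X and u_k applied to outputs of R̂_k(x̂_{t₀}, u) ⊕ E lies in U for all k ≤ T, and R̂_{T+1}(x̂_{t₀}, u) ⊕ E ⊆ X_R, with X_R ⊆ X invariant under π_R for the true dynamics (f(x, π_R(g(x)), w) ∈ X_R ∀ x ∈ X_R, w ∈ W) and π_R(g(X_R)) ⊆ U. If the true trajectory follows the fallback inputs u_k for t₀ ≤ t ≤ t₀+T with errors e_t ∈ E during this window, then x_t ∈ X and the applied input lies in U for all t ≥ t₀. -/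
open Pointwise

/-- Reachable sets of the state estimate under a policy sequence. -/
def reach {n m d r : ℕ}
    (f : (Fin n → ℝ) → (Fin m → ℝ) → (Fin d → ℝ) → (Fin n → ℝ))
    (g : (Fin n → ℝ) → (Fin r → ℝ))
    (W : Set (Fin d → ℝ)) (E : Set (Fin n → ℝ))
    (u : ℕ → (Fin r → ℝ) → (Fin m → ℝ))
    (x0 : Fin n → ℝ) : ℕ → Set (Fin n → ℝ)
  | 0 => {x0}
  | k + 1 =>
      {x' | ∃ x ∈ reach f g W E u x0 k, ∃ w ∈ W, ∃ e ∈ E, ∃ e' ∈ E,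
        x' = f (x + e) (u k (g (x + e))) w - e'}

theorem fallback_tube_safety {n m d r : ℕ}
    (f : (Fin n → ℝ) → (Fin m → ℝ) → (Fin d → ℝ) → (Fin n → ℝ))
    (g : (Fin n → ℝ) → (Fin r → ℝ))
    (W : Set (Fin d → ℝ)) (E : Set (Fin n → ℝ))
    (X XR : Set (Fin n → ℝ)) (U : Set (Fin m → ℝ))
    (πR : (Fin r → ℝ) → (Fin m → ℝ))
    (u : ℕ → (Fin r → ℝ) → (Fin m → ℝ))
    (T t0 : ℕ)
    (x xhat e : ℕ → (Fin n → ℝ)) (w : ℕ → (Fin d → ℝ))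
    -- state constraints along the fallback tube
    (hstate : ∀ k ≤ T, reach f g W E u (xhat t0) k + E ⊆ X)
    -- input constraints along the fallback tube
    (hinput : ∀ k ≤ T, ∀ z ∈ reach f g W E u (xhat t0) k + E, u k (g z) ∈ U)
    -- terminal constraint: reach the recovery set
    (hterm : reach f g W E u (xhat t0) (T + 1) + E ⊆ XR)
    (hXRX : XR ⊆ X)
    -- invariance of the recovery set under π_R for the true dynamics
    (hinv : ∀ y ∈ XR, ∀ ww ∈ W, f y (πR (g y)) ww ∈ XR)
    -- the recovery policy respects input constraints on the recovery set
    (hinpR : ∀ y ∈ XR, πR (g y) ∈ U)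
    -- disturbances are bounded
    (hw : ∀ t, w t ∈ W)
    -- true dynamics under the applied fallback inputs
    (hdyn : ∀ t, t0 ≤ t → x (t + 1) =
      f (x t) (if t ≤ t0 + T then u (t - t0) (g (x t)) else πR (g (x t))) (w t))
    -- perception errors relate the state and the estimate during the window
    (herr : ∀ t, t0 ≤ t → t ≤ t0 + T + 1 → x t = xhat t + e t ∧ e t ∈ E)
    -- estimate dynamics hold until the fallback terminates
    (hest : ∀ t, t0 ≤ t → t ≤ t0 + T → xhat (t + 1) =
      f (xhat t + e t) (u (t - t0) (g (xhat t + e t))) (w t) - e (t + 1)) :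
    ∀ t, t0 ≤ t → x t ∈ X ∧
      (if t ≤ t0 + T then u (t - t0) (g (x t)) else πR (g (x t))) ∈ U := by
  -- the estimate stays in the reach sets
  have hreach : ∀ k ≤ T + 1, xhat (t0 + k) ∈ reach f g W E u (xhat t0) k := by
    intro k
    induction k with
    | zero => intro _; simp [reach]
    | succ k ih =>
      intro hk
      have hkT : k ≤ T := Nat.lt_succ_iff.mp hk
      have hx := hest (t0 + k) (Nat.le_add_right _ _) (by omega)
      have he := (herr (t0 + k) (Nat.le_add_right _ _) (by omega)).2
      have he' := (herr (t0 + k + 1) (by omega) (by omega)).2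
      refine ⟨xhat (t0 + k), ih (by omega), w (t0 + k), hw _, e (t0 + k), he,
        e (t0 + k + 1), he', ?_⟩
      rw [show t0 + k - t0 = k by omega] at hx
      exact hx
  -- during window: x t ∈ reach (t-t0) + E
  have hwin : ∀ t, t0 ≤ t → t ≤ t0 + T + 1 →
      x t ∈ reach f g W E u (xhat t0) (t - t0) + E := by
    intro t ht ht'
    obtain ⟨hxe, he⟩ := herr t ht ht'
    rw [hxe]
    exact Set.add_mem_add (by
      have := hreach (t - t0) (by omega)
      rwa [Nat.add_sub_cancel' ht] at this) he
  -- after window: x stays in XR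
  have hafter : ∀ j, x (t0 + T + 1 + j) ∈ XR := by
    intro j
    induction j with
    | zero =>
      have h := hwin (t0 + T + 1) (by omega) le_rfl
      rw [show t0 + T + 1 - t0 = T + 1 by omega] at h
      simpa using hterm h
    | succ j ih =>
      have hd := hdyn (t0 + T + 1 + j) (by omega)
      rw [if_neg (by omega)] at hd
      rw [show t0 + T + 1 + (j + 1) = t0 + T + 1 + j + 1 from rfl, hd]
      exact hinv _ ih _ (hw _)
  intro t ht
  by_cases hc : t ≤ t0 + T
  · have hx := hwin t ht (by omega)
    rw [if_pos hc]
    exact ⟨hstate (t - t0) (by omega) hx, hinput (t - t0) (by omega) _ hx⟩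
  · obtain ⟨j, hj⟩ : ∃ j, t = t0 + T + 1 + j := ⟨t - (t0 + T + 1), by omega⟩
    have hxr : x t ∈ XR := hj ▸ hafter j
    rw [if_neg hc]
    exact ⟨hXRX hxr, hinpR _ hxr⟩
end
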